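/- arXiv:2508.02352 — 4 statements merged into one kernel-verified Lean document; each statement's English description precedes it below -/
import Mathlib

section
/- Let v₁,…,v_k be a sequence of vertices where v_{i+1} ≠ v_i only when v_i and v_{i+1} swap adjacent ranks between f_i and f_{i+1} (i.e., f_i(v_i) < f_i(v_{i+1}) and f_{i+1}(v_i) > f_{i+1}(v_{i+1}), or symmetrically), and each f_{i+1} agrees with f_i except on at most one vertex whose value strictly increases. Then f_i(v_i) ≥ f₁(v₁) for all 1 ≤ i ≤ k. -/
/-! Only a step where the tracked vertex changes, i.e. a swap of `a = v i` with `b = v (i+1)`,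
could lower the tracked value. As a single vertex moves, one of `a`, `b` keeps its value; the
swap then forces `f i a ≤ f (i+1) b`, the other orientation being impossible since values only
increase. Hence `i ↦ f i (v i)` is monotone. -/

theorem eq_or_eq_of_agree_off_one {V β : Type*} {g h : V → β}
    (hone : ∃ w, ∀ x, x ≠ w → g x = h x) {a b : V}
    (hab : b ≠ a) : g a = h a ∨ g b = h b := by
  obtain ⟨w, hw⟩ := hone
  by_cases ha : a = w
  · exact .inr (hw b (ha ▸ hab))
  · exact .inl (hw a ha)

section RankSwap

variable {V α : Type*} [Preorder α] {g h : V → α}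

theorem le_apply_of_swap (hle : ∀ x, g x ≤ h x) {a b : V} (hfix : g a = h a ∨ g b = h b)
    (hswap : (g a < g b ∧ h b < h a) ∨ (g b < g a ∧ h a < h b)) : g a ≤ h b := by
  rcases hswap with ⟨hg, hh⟩ | ⟨hg, hh⟩ <;> rcases hfix with ha | hb
  · have := hle b; order
  · exact (hg.trans_eq hb).le
  · exact (ha.trans_lt hh).le
  · have := hle a; order

theorem le_apply_of_step (hle : ∀ x, g x ≤ h x) (hone : ∃ w, ∀ x, x ≠ w → g x = h x)
    {a b : V} (hswap : b ≠ a → (g a < g b ∧ h b < h a) ∨ (g b < g a ∧ h a < h b)) :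
    g a ≤ h b := by
  by_cases hab : b = a
  · exact hab ▸ hle b
  · exact le_apply_of_swap hle (eq_or_eq_of_agree_off_one hone hab) (hswap hab)

end RankSwap

theorem stmt_4_general {V : Type*} {k : ℕ} (f : Fin (k + 1) → V → ℝ) (v : Fin (k + 1) → V)
    (hmono : ∀ (i : Fin k) (x : V), f i.castSucc x ≤ f i.succ x)
    (hone : ∀ i : Fin k, ∃ w : V, ∀ x, x ≠ w → f i.castSucc x = f i.succ x)
    (hswap : ∀ i : Fin k, v i.succ ≠ v i.castSucc →
      (f i.castSucc (v i.castSucc) < f i.castSucc (v i.succ) ∧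
        f i.succ (v i.succ) < f i.succ (v i.castSucc)) ∨
      (f i.castSucc (v i.succ) < f i.castSucc (v i.castSucc) ∧
        f i.succ (v i.castSucc) < f i.succ (v i.succ))) :
    ∀ i, f 0 (v 0) ≤ f i (v i) := by
  have htracked : Monotone fun i => f i (v i) :=
    Fin.monotone_iff_le_succ.mpr fun i => le_apply_of_step (hmono i) (hone i) (hswap i)
  exact fun i => htracked (Fin.zero_le i)

/-- for a sequence of fields where each step agrees with the previous one
except on at most one vertex whose value increases, and a tracking sequence of vertices
`v₁,…,v_k` that changes only when the tracked vertex swaps adjacent ranks with the next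
one, the value of the tracked vertex never drops below its initial value:
`f_i(v_i) ≥ f₁(v₁)` for all `i`. -/
theorem stmt_4 {V : Type*} {k : ℕ} (f : Fin (k + 1) → V → ℝ) (v : Fin (k + 1) → V)
    (hinj : ∀ i, Function.Injective (f i))
    (hmono : ∀ (i : Fin k) (x : V), f i.castSucc x ≤ f i.succ x)
    (hone : ∀ i : Fin k, ∃ w : V, ∀ x, x ≠ w → f i.castSucc x = f i.succ x)
    (hswap : ∀ i : Fin k, v i.succ ≠ v i.castSucc →
      (f i.castSucc (v i.castSucc) < f i.castSucc (v i.succ) ∧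
        f i.succ (v i.succ) < f i.succ (v i.castSucc)) ∨
      (f i.castSucc (v i.succ) < f i.castSucc (v i.castSucc) ∧
        f i.succ (v i.castSucc) < f i.succ (v i.succ))) :
    ∀ i, f 0 (v 0) ≤ f i (v i) :=
  stmt_4_general f v hmono hone hswap
end

section
/- With the tracking sequence v₁,…,v_k as above and u_i defined as the vertex among {v₁,…,v_i} with the largest f_i-value, the following invariant holds for all i: f_k(u_i) ≤ f₁(v₁) + 2ε, and whenever v_i = u_i one additionally has f₁(v_i) ≤ f₁(v₁); here ε bounds the total perturbation, ‖f₁ − f_k‖_∞ ≤ ε and f_k(x) ≥ f₁(x) for all x with f_k(x) − f₁(x) ≤ 2ε. -/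
open Classical in
/-- Rank of vertex `v` in the ordering of vertices by ascending `f`-value. -/
noncomputable def rankOf {V : Type*} [Fintype V] (f : V → ℝ) (v : V) : ℕ :=
  (Finset.univ.filter fun u => f u ≤ f v).card

/-- Minimal vertex perturbation: exactly one vertex changes value, and the rank
orderings either coincide or differ by one adjacent transposition. -/
def MinimalPerturbation {V : Type*} [Fintype V] (f f' : V → ℝ) : Prop :=
  (∃! v, f v ≠ f' v) ∧
  (rankOf f = rankOf f' ∨
    ∃ v u : V, u ≠ v ∧ f v ≠ f' v ∧
      ((rankOf f v : ℤ) - rankOf f u).natAbs = 1 ∧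
      rankOf f v = rankOf f' u ∧ rankOf f u = rankOf f' v ∧
      ∀ w, w ≠ u → w ≠ v → rankOf f w = rankOf f' w)

/-! The tracked vertex `u_i` is a running maximum. When it changes from `p` to `p'`, the two
vertices swap order between times `i` and `i + 1`: `p'` was below `p` and ends above it. A pair
that is ordered `x < y` at the start can only swap from `y` above to `y` below, so `p'` was
below `p` at the start. Hence `f₁(u_i)` never increases, and `f_k(u_i) ≤ f₁(u_i) + 2ε`. -/

section SingleCrossing

variable {ι V : Type*} [LinearOrder ι]

def SingleCrossing (f : ι → V → ℝ) (s t : ι) : Prop :=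
  (∀ x y, f s x < f s y → f t x < f t y → ∀ i, f i x < f i y) ∧
  (∀ x y, f s x < f s y → f t y < f t x →
    ∃ i, (∀ j, j < i → f j x < f j y) ∧ ∀ j, i ≤ j → f j y < f j x)

variable {f : ι → V → ℝ} {s t a b : ι} {x y : V}

theorem SingleCrossing.lt_of_lt_of_le (hf : SingleCrossing f s t)
    (ht : Function.Injective (f t)) (hxy : f s x < f s y) (hab : a ≤ b)
    (hyx : f a y < f a x) : f b y < f b x := by
  rcases lt_trichotomy (f t x) (f t y) with hlt | heq | hgt
  · exact absurd (hf.1 x y hxy hlt a) hyx.not_gt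
  · exact absurd (ht heq ▸ hxy) (lt_irrefl _)
  · obtain ⟨i, hbefore, hafter⟩ := hf.2 x y hxy hgt
    exact hafter b (le_trans (not_lt.mp fun hai => (hbefore a hai).not_gt hyx) hab)

theorem SingleCrossing.lt_start_of_swap (hf : SingleCrossing f s t)
    (hs : Function.Injective (f s)) (ht : Function.Injective (f t)) (hab : a ≤ b)
    (hyx : f a y < f a x) (hxy : f b x < f b y) : f s y < f s x := by
  rcases lt_trichotomy (f s x) (f s y) with hlt | heq | hgt
  · exact absurd (hf.lt_of_lt_of_le ht hlt hab hyx) hxy.not_gt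
  · exact absurd (hs heq ▸ hyx) (lt_irrefl _)
  · exact hgt

end SingleCrossing

theorem runningMax_step {V : Type*} {g g' : V → ℝ} (hg : Function.Injective g)
    (hg' : Function.Injective g') {S : Set V} {w w' p p' : V} (hw : w ∈ S)
    (htrack : w' ≠ w → (g w < g w' ∧ g' w' < g' w) ∨ (g w' < g w ∧ g' w < g' w'))
    (hp : p ∈ S) (hpmax : ∀ x ∈ S, g x ≤ g p)
    (hp' : p' ∈ insert w' S) (hp'max : ∀ x ∈ insert w' S, g' x ≤ g' p') :
    p' = p ∨ (g p' < g p ∧ g' p < g' p') := by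
  by_cases hpp : p' = p
  · exact Or.inl hpp
  have hbelow_of_mem : p' ∈ S → g p' < g p := fun hS =>
    (hpmax p' hS).lt_of_ne fun h => hpp (hg h)
  refine Or.inr ⟨?_, (hp'max p (Set.mem_insert_of_mem _ hp)).lt_of_ne fun h => hpp (hg' h).symm⟩
  rcases hp' with rfl | hS
  · by_cases hww : p' = w
    · exact hbelow_of_mem (hww ▸ hw)
    rcases htrack hww with ⟨-, hdown⟩ | ⟨hup, -⟩
    · exact absurd (hp'max w (Set.mem_insert_of_mem _ hw)) hdown.not_ge
    · exact hup.trans_le (hpmax w hw)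
  · exact hbelow_of_mem hS

theorem antitone_start_value_of_runningMax {V : Type*} {k : ℕ} {f : Fin (k + 1) → V → ℝ}
    {v u : Fin (k + 1) → V} (hinj : ∀ i, Function.Injective (f i))
    (hcross : SingleCrossing f 0 (Fin.last k))
    (htrack : ∀ i : Fin k, v i.succ ≠ v i.castSucc →
      ((f i.castSucc (v i.castSucc) < f i.castSucc (v i.succ) ∧
        f i.succ (v i.succ) < f i.succ (v i.castSucc)) ∨
       (f i.castSucc (v i.succ) < f i.castSucc (v i.castSucc) ∧
        f i.succ (v i.castSucc) < f i.succ (v i.succ))))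
    (hu : ∀ i, (∃ j ≤ i, u i = v j) ∧ ∀ j ≤ i, f i (v j) ≤ f i (u i)) :
    Antitone fun i => f 0 (u i) := by
  rw [Fin.antitone_iff_succ_le]
  intro i
  obtain ⟨⟨j, hj, hpj⟩, hpmax⟩ := hu i.castSucc
  obtain ⟨⟨j', hj', hpj'⟩, hsuccmax⟩ := hu i.succ
  have hcs : i.castSucc ≤ i.succ := Fin.castSucc_lt_succ.le
  have hp' : u i.succ ∈ insert (v i.succ) (v '' Set.Iic i.castSucc) := by
    rcases hj'.lt_or_eq with hlt | rfl
    · exact Or.inr ⟨j', Fin.le_castSucc_iff.mpr hlt, hpj'.symm⟩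
    · exact Or.inl hpj'
  have hp'max : ∀ x ∈ insert (v i.succ) (v '' Set.Iic i.castSucc),
      f i.succ x ≤ f i.succ (u i.succ) := by
    rw [Set.forall_mem_insert]
    exact ⟨hsuccmax _ le_rfl, by rintro _ ⟨l, hl, rfl⟩; exact hsuccmax l (hl.trans hcs)⟩
  rcases runningMax_step (hinj _) (hinj _) (S := v '' Set.Iic i.castSucc)
      ⟨_, Set.self_mem_Iic, rfl⟩ (htrack i) ⟨j, hj, hpj.symm⟩
      (by rintro _ ⟨l, hl, rfl⟩; exact hpmax l hl) hp' hp'max with heq | ⟨hdown, hup⟩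
  · exact (congrArg (f 0) heq).le
  · exact (hcross.lt_start_of_swap (hinj 0) (hinj _) hcs hdown hup).le

theorem stmt_5_general {V : Type*} {k : ℕ} (ε : ℝ)
    (f : Fin (k + 1) → V → ℝ) (v u : Fin (k + 1) → V)
    (hinj : ∀ i, Function.Injective (f i))
    (htot : ∀ x, f (Fin.last k) x - f 0 x ≤ 2 * ε)
    (ha : ∀ x y : V, f 0 x < f 0 y → f (Fin.last k) x < f (Fin.last k) y →
      ∀ i, f i x < f i y)
    (hb : ∀ x y : V, f 0 x < f 0 y → f (Fin.last k) y < f (Fin.last k) x →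
      ∃ i : Fin (k + 1), (∀ j, j < i → f j x < f j y) ∧ ∀ j, i ≤ j → f j y < f j x)
    (htrack : ∀ i : Fin k, v i.succ ≠ v i.castSucc ↔
      ((f i.castSucc (v i.castSucc) < f i.castSucc (v i.succ) ∧
        f i.succ (v i.succ) < f i.succ (v i.castSucc)) ∨
       (f i.castSucc (v i.succ) < f i.castSucc (v i.castSucc) ∧
        f i.succ (v i.castSucc) < f i.succ (v i.succ))))
    (hu : ∀ i : Fin (k + 1), (∃ j ≤ i, u i = v j) ∧ ∀ j ≤ i, f i (v j) ≤ f i (u i)) :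
    ∀ i : Fin (k + 1), f (Fin.last k) (u i) ≤ f 0 (v 0) + 2 * ε ∧
      (v i = u i → f 0 (v i) ≤ f 0 (v 0)) := by
  have hanti := antitone_start_value_of_runningMax hinj ⟨ha, hb⟩ (fun i => (htrack i).mp) hu
  have hu0 : u 0 = v 0 := by
    obtain ⟨⟨j, hj, hj0⟩, -⟩ := hu 0
    rwa [Fin.le_zero_iff.mp hj] at hj0
  intro i
  have hstart : f 0 (u i) ≤ f 0 (v 0) := hu0 ▸ hanti (Fin.zero_le i)
  exact ⟨by linarith [htot (u i)], fun hvu => hvu ▸ hstart⟩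

/-- with the tracking sequence `v₁,…,v_k` and `u_i` the vertex among
`{v₁,…,v_i}` of largest `f_i`-value, one has `f_k(u_i) ≤ f₁(v₁) + 2ε` for all `i`, and
whenever `v_i = u_i` additionally `f₁(v_i) ≤ f₁(v₁)`; here the perturbation satisfies
`‖f₁ − f_k‖_∞ ≤ ε`, values are nondecreasing, and each total increase is at most `2ε`. -/
theorem stmt_5 {V : Type*} [Fintype V] {k : ℕ} (ε : ℝ)
    (f : Fin (k + 1) → V → ℝ) (v u : Fin (k + 1) → V)
    (hinj : ∀ i, Function.Injective (f i))
    (hstep : ∀ i : Fin k, MinimalPerturbation (f i.castSucc) (f i.succ))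
    (hmono : ∀ (i : Fin k) (x : V), f i.castSucc x ≤ f i.succ x)
    (hsup : ∀ x, |f 0 x - f (Fin.last k) x| ≤ ε)
    (htot : ∀ x, f (Fin.last k) x - f 0 x ≤ 2 * ε)
    (ha : ∀ x y : V, f 0 x < f 0 y → f (Fin.last k) x < f (Fin.last k) y →
      ∀ i, f i x < f i y)
    (hb : ∀ x y : V, f 0 x < f 0 y → f (Fin.last k) y < f (Fin.last k) x →
      ∃ i : Fin (k + 1), (∀ j, j < i → f j x < f j y) ∧ ∀ j, i ≤ j → f j y < f j x)
    (htrack : ∀ i : Fin k, v i.succ ≠ v i.castSucc ↔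
      ((f i.castSucc (v i.castSucc) < f i.castSucc (v i.succ) ∧
        f i.succ (v i.succ) < f i.succ (v i.castSucc)) ∨
       (f i.castSucc (v i.succ) < f i.castSucc (v i.castSucc) ∧
        f i.succ (v i.castSucc) < f i.succ (v i.succ))))
    (hu : ∀ i : Fin (k + 1), (∃ j ≤ i, u i = v j) ∧ ∀ j ≤ i, f i (v j) ≤ f i (u i)) :
    ∀ i : Fin (k + 1), f (Fin.last k) (u i) ≤ f 0 (v 0) + 2 * ε ∧
      (v i = u i → f 0 (v i) ≤ f 0 (v 0)) :=
  stmt_5_general ε f v u hinj htot ha hb htrack hu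
end

section
/- In an augmented merge tree, under a minimal vertex perturbation where x passes y with (y,x) ∈ E(T_f), every edge (u,v) of T_f with {u,v} ∩ {x,y} = ∅ remains an edge of T_{f'}; moreover (x,y) ∈ E(T_{f'}), and if (x,p) ∈ E(T_f) then (y,p) ∈ E(T_{f'}). -/
/-- `u` and `w` lie in the same connected component of the vertex set `S`
(connectivity via edges of `G` staying inside `S`). -/
def connIn {V : Type*} (G : SimpleGraph V) (S : Set V) (u w : V) : Prop :=
  u ∈ S ∧ w ∈ S ∧ Relation.ReflTransGen (fun a b => a ∈ S ∧ b ∈ S ∧ G.Adj a b) u w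

/-- Edge `(y,x)` of the augmented merge (split) tree of the field `f`. -/
def mtEdge {V : Type*} (G : SimpleGraph V) (f : V → ℝ) (y x : V) : Prop :=
  (∀ w, connIn G {z | f x < f z} y w → f y ≤ f w) ∧
  ∃ y', connIn G {z | f x < f z} y y' ∧ G.Adj x y'

/-!
Only `x` moves, and no other value lies between its old and new value. Hence the superlevel set
above any vertex `v ≠ x, y` is unchanged, and lifting `x` cannot lower a component minimum.
Above `y`, the new superlevel set is the old one above `x` with `y` traded for `x`, which is now
its lowest vertex; a path from `y` to a neighbour of `x` leaves `y` through some neighbour of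
`y`, which yields the edge `(x, y)`. If `(x, p)` is an edge, `y` is joined to `x` above `p`, so
once `x` is lifted `y` becomes the lowest vertex of that component.
-/

namespace connIn

variable {V : Type*} {G : SimpleGraph V} {S T : Set V} {u v w : V}

theorem refl (hu : u ∈ S) : connIn G S u u :=
  ⟨hu, hu, .refl⟩

theorem of_adj (hu : u ∈ S) (hw : w ∈ S) (huw : G.Adj u w) : connIn G S u w :=
  ⟨hu, hw, .single ⟨hu, hw, huw⟩⟩

theorem symm (h : connIn G S u w) : connIn G S w u :=
  ⟨h.2.1, h.1,
    Relation.ReflTransGen.mono (fun _ _ hab => ⟨hab.2.1, hab.1, hab.2.2.symm⟩) _ _ h.2.2.swap⟩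

theorem trans (huv : connIn G S u v) (hvw : connIn G S v w) : connIn G S u w :=
  ⟨huv.1, hvw.2.1, huv.2.2.trans hvw.2.2⟩

theorem mono (hST : S ⊆ T) (h : connIn G S u w) : connIn G T u w :=
  ⟨hST h.1, hST h.2.1,
    Relation.ReflTransGen.mono (fun _ _ hab => ⟨hST hab.1, hST hab.2.1, hab.2.2⟩) _ _ h.2.2⟩

theorem exists_adj_connIn_diff (h : connIn G S u w) (hwu : w ≠ u) :
    ∃ a, G.Adj u a ∧ connIn G (S \ {u}) a w := by
  obtain ⟨-, hw, hpath⟩ := h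
  induction hpath with
  | refl => exact absurd rfl hwu
  | @tail b c _ hbc ih =>
    obtain ⟨hb, hc, hadj⟩ := hbc
    have hc' : c ∈ S \ {u} := ⟨hc, hwu⟩
    by_cases hbu : b = u
    · subst hbu
      exact ⟨c, hadj, refl hc'⟩
    · obtain ⟨a, hua, ha⟩ := ih hbu hb
      exact ⟨a, hua, ha.trans (of_adj ⟨hb, hbu⟩ hc' hadj)⟩

end connIn

/-- The minimal vertex perturbation: `x` swaps ranks with `y`, the next vertex above it. -/
structure RaisesPast {V : Type*} (f f' : V → ℝ) (x y : V) : Prop where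
  apply_of_ne : ∀ w, w ≠ x → f' w = f w
  lt : f x < f y
  lt_apply : f y < f' x
  not_between : ∀ z, z ≠ x → z ≠ y → f z < f x ∨ f' x < f z

namespace RaisesPast

variable {V : Type*} {G : SimpleGraph V} {f f' : V → ℝ} {x y p u v w : V}
  (h : RaisesPast f f' x y)
include h

theorem apply_y : f' y = f y :=
  h.apply_of_ne y (ne_of_apply_ne f h.lt.ne')

theorem le_apply (w : V) : f w ≤ f' w := by
  by_cases hwx : w = x
  · subst hwx
    exact (h.lt.trans h.lt_apply).le
  · exact (h.apply_of_ne w hwx).ge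

theorem apply_x_lt (hwx : w ≠ x) (hwy : w ≠ y) (hw : f x ≤ f w) : f' x < f' w := by
  rw [h.apply_of_ne w hwx]
  exact (h.not_between w hwx hwy).resolve_left hw.not_gt

theorem setOf_apply_lt_eq (hvx : v ≠ x) (hv : f v < f x ∨ f' x < f v) :
    {z | f' v < f' z} = {z | f v < f z} := by
  refine Set.ext fun z => ?_
  show f' v < f' z ↔ f v < f z
  rw [h.apply_of_ne v hvx]
  by_cases hzx : z = x
  · subst hzx
    rcases hv with hv | hv
    · exact iff_of_true (hv.trans (h.lt.trans h.lt_apply)) hv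
    · exact iff_of_false hv.not_gt ((h.lt.trans h.lt_apply).trans hv).not_gt
  · rw [h.apply_of_ne z hzx]

theorem diff_subset_setOf_apply_lt :
    {z | f x < f z} \ {y} ⊆ {z | f' y < f' z} := fun z ⟨hz, hzy⟩ =>
  calc f' y = f y := h.apply_y
    _ < f' x := h.lt_apply
    _ < f' z := h.apply_x_lt (ne_of_apply_ne f hz.ne') hzy hz.le

theorem mtEdge_of_ne (huv : mtEdge G f u v) (hux : u ≠ x) (hvx : v ≠ x) (hvy : v ≠ y) :
    mtEdge G f' u v := by
  have hS := h.setOf_apply_lt_eq hvx (h.not_between v hvx hvy)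
  refine ⟨fun w hw => ?_, by simpa only [hS] using huv.2⟩
  rw [hS] at hw
  calc f' u = f u := h.apply_of_ne u hux
    _ ≤ f w := huv.1 w hw
    _ ≤ f' w := h.le_apply w

theorem mtEdge_swap (hyx : mtEdge G f y x) : mtEdge G f' x y := by
  have hx : x ∈ {z | f' y < f' z} := by
    show f' y < f' x
    rw [h.apply_y]
    exact h.lt_apply
  refine ⟨fun w hw => ?_, ?_⟩
  · by_cases hwx : w = x
    · exact hwx ▸ le_rfl
    have hyw : f' y < f' w := hw.2.1
    rw [h.apply_y, h.apply_of_ne w hwx] at hyw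
    exact (h.apply_x_lt hwx (ne_of_apply_ne f hyw.ne') (h.lt.trans hyw).le).le
  · obtain ⟨y', hyy', hxy'⟩ := hyx.2
    by_cases hy' : y' = y
    · subst hy'
      exact ⟨x, connIn.refl hx, hxy'.symm⟩
    obtain ⟨a, hya, hay'⟩ := hyy'.exists_adj_connIn_diff hy'
    have hxy'' : connIn G {z | f' y < f' z} x y' :=
      .of_adj hx (h.diff_subset_setOf_apply_lt ⟨hyy'.2.1, hy'⟩) hxy'
    exact ⟨a, hxy''.trans (hay'.mono h.diff_subset_setOf_apply_lt).symm, hya⟩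

theorem mtEdge_y_of_mtEdge_x (hyx : mtEdge G f y x) (hxp : mtEdge G f x p) :
    mtEdge G f' y p := by
  obtain ⟨x', hxx', hpx'⟩ := hxp.2
  have hpx : f p < f x := hxx'.1
  have hS := h.setOf_apply_lt_eq (ne_of_apply_ne f hpx.ne) (.inl hpx)
  have hSxp : {z | f x < f z} ⊆ {z | f p < f z} := fun _ hz => hpx.trans hz
  obtain ⟨y', hyy', hxy'⟩ := hyx.2
  have hyx' : connIn G {z | f p < f z} y x :=
    (hyy'.mono hSxp).trans (.of_adj (hSxp hyy'.2.1) hpx hxy'.symm)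
  refine ⟨fun w hw => ?_, ⟨x', hS ▸ hyx'.trans (hxx'.mono le_rfl), hpx'⟩⟩
  rw [hS] at hw
  rw [h.apply_y]
  by_cases hwx : w = x
  · exact hwx ▸ h.lt_apply.le
  by_cases hwy : w = y
  · rw [hwy, h.apply_y]
  calc f y ≤ f' x := h.lt_apply.le
    _ ≤ f' w := (h.apply_x_lt hwx hwy (hxp.1 w (hyx'.symm.trans hw))).le

end RaisesPast

theorem stmt_7_general {V : Type*} (G : SimpleGraph V) (f f' : V → ℝ)
    (x y : V)
    (hothers : ∀ w, w ≠ x → f' w = f w)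
    (h1 : f x < f y) (h2 : f y < f' x)
    (hadjrank : ∀ z, z ≠ x → z ≠ y → f z < f x ∨ f' x < f z)
    (hedge : mtEdge G f y x) :
    (∀ u v, mtEdge G f u v → u ≠ x → u ≠ y → v ≠ x → v ≠ y → mtEdge G f' u v) ∧
    mtEdge G f' x y ∧
    (∀ p, mtEdge G f x p → mtEdge G f' y p) := by
  have h : RaisesPast f f' x y := ⟨hothers, h1, h2, hadjrank⟩
  exact ⟨fun u v huv hux _ hvx hvy => h.mtEdge_of_ne huv hux hvx hvy,
    h.mtEdge_swap hedge, fun p hxp => h.mtEdge_y_of_mtEdge_x hedge hxp⟩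

/-- under a minimal vertex perturbation where `x` passes `y` with
`(y,x) ∈ E(T_f)`, every edge `(u,v)` of `T_f` with `{u,v} ∩ {x,y} = ∅` remains an edge
of `T_{f'}`; moreover `(x,y) ∈ E(T_{f'})`, and if `(x,p) ∈ E(T_f)` then
`(y,p) ∈ E(T_{f'})`. -/
theorem stmt_7 {V : Type*} (G : SimpleGraph V) (f f' : V → ℝ)
    (hf : Function.Injective f) (hf' : Function.Injective f')
    (x y : V) (hxy : x ≠ y)
    (hothers : ∀ w, w ≠ x → f' w = f w)
    (h1 : f x < f y) (h2 : f y < f' x)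
    (hadjrank : ∀ z, z ≠ x → z ≠ y → f z < f x ∨ f' x < f z)
    (hedge : mtEdge G f y x) :
    (∀ u v, mtEdge G f u v → u ≠ x → u ≠ y → v ≠ x → v ≠ y → mtEdge G f' u v) ∧
    mtEdge G f' x y ∧
    (∀ p, mtEdge G f x p → mtEdge G f' y p) :=
  stmt_7_general G f f' x y hothers h1 h2 hadjrank hedge
end

section
/- The classic unconstrained tree edit distance with node labels given by the scalar distance to the parent and cost c(ℓ₁,ℓ₂)=|ℓ₁−ℓ₂| is unstable under edge splits: for every constant C there exist two abstract merge trees T and T' differing by a minimal vertex perturbation of extent ε (an edge split) such that δ_G(T,T') > C·ε. In particular, for the pair of trees where T has root path values 0, x and leaves at heights 3x, 3x (with an extra saddle at 2x and leaf at 2x+ε) and T' has values 0, x with two leaves at 3x, any classic edit mapping leaves one node of label x unmatched, so δ_G(T,T') ≥ x. -/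
/-- An (unordered) node-labeled rooted tree; each node is labeled by the scalar distance
to its parent (the root by the blank label `0`). -/
inductive LTree : Type where
  | node : ℝ → List LTree → LTree

namespace LTree

/-- One classic (unconstrained) edit operation with its cost: relabel a node, delete a
node (its children reattach to its parent, cost `|ℓ − 0|`), insert a node (inverse),
reorder children (cost 0, unordered trees), or operate deeper in the tree. -/
inductive GStep : LTree → LTree → ℝ → Prop
  | relabel (ℓ ℓ' : ℝ) (cs : List LTree) :
      GStep (.node ℓ cs) (.node ℓ' cs) |ℓ - ℓ'|
  | delete (ℓ ℓ' : ℝ) (cs' cs : List LTree) :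
      GStep (.node ℓ (.node ℓ' cs' :: cs)) (.node ℓ (cs' ++ cs)) |ℓ'|
  | insert (ℓ ℓ' : ℝ) (cs' cs : List LTree) :
      GStep (.node ℓ (cs' ++ cs)) (.node ℓ (.node ℓ' cs' :: cs)) |ℓ'|
  | perm (ℓ : ℝ) (cs cs' : List LTree) : cs.Perm cs' →
      GStep (.node ℓ cs) (.node ℓ cs') 0
  | congr (ℓ : ℝ) (t t' : LTree) (cs : List LTree) (c : ℝ) :
      GStep t t' c → GStep (.node ℓ (t :: cs)) (.node ℓ (t' :: cs)) c

/-- Edit sequences with their total cost. -/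
inductive GSeq : LTree → LTree → ℝ → Prop
  | refl (t : LTree) : GSeq t t 0
  | cons {t₁ t₂ t₃ : LTree} {c d : ℝ} :
      GStep t₁ t₂ c → GSeq t₂ t₃ d → GSeq t₁ t₃ (c + d)

/-- The classic unconstrained tree edit distance `δ_G`. -/
noncomputable def dG (t t' : LTree) : ℝ := sInf {c | GSeq t t' c}

end LTree

/-- The merge tree `T` of Figure 5 (left): root `A` at `0`, child `B` at `x` (label `x`),
`B`'s children `C` at `3x` (label `2x`) and saddle `E` at `2x` (label `x`); `E`'s
children `D` at `3x` (label `x`) and `F` at `2x+ε` (label `ε`). -/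
noncomputable def splitLeft (x ε : ℝ) : LTree :=
  .node 0 [.node x [.node (2 * x) [], .node x [.node x [], .node ε []]]]

/-- The merge tree `T'` of Figure 5 (right): root `A` at `0`, child `B` at `x`
(label `x`) with two leaf children at `3x` (labels `2x`, `2x`). -/
noncomputable def splitRight (x : ℝ) : LTree :=
  .node 0 [.node x [.node (2 * x) [], .node (2 * x) []]]

/-!
Weigh every node by `min |ℓ| x`, its label truncated at `x`. A relabel changes this weight by
at most the relabel cost, and a deletion or insertion by at most the label of the node, so the
total weight is `1`-Lipschitz along edit sequences and bounds `δ_G` from below. Truncation is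
what makes the count work: the labels `2x` of `C` and of the two leaves of `T'` count only `x`,
so `T` has four nodes `B, C, E, D` of weight `x` and `T'` only three, whatever the split `ε`.
-/

namespace LTree

noncomputable def truncWeight (x : ℝ) : LTree → ℝ
  | .node ℓ cs => min |ℓ| x + (cs.attach.map fun c => truncWeight x c.1).sum
decreasing_by
  have := List.sizeOf_lt_of_mem c.2
  simp only [LTree.node.sizeOf_spec]
  omega

@[simp]
lemma truncWeight_node (x ℓ : ℝ) (cs : List LTree) :
    truncWeight x (.node ℓ cs) = min |ℓ| x + (cs.map (truncWeight x)).sum := by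
  rw [truncWeight, List.map_attach_eq_pmap, List.pmap_eq_map]

lemma abs_min_sub_min_le (a b c : ℝ) : |min a c - min b c| ≤ |a - b| := by
  simpa using abs_min_sub_min_le_max a c b c

lemma GStep.abs_truncWeight_sub_le {x : ℝ} (hx : 0 ≤ x) {t t' : LTree} {c : ℝ}
    (h : GStep t t' c) : |truncWeight x t - truncWeight x t'| ≤ c := by
  have hmin (ℓ : ℝ) : |min |ℓ| x| ≤ |ℓ| := by
    rw [abs_of_nonneg (le_min (abs_nonneg ℓ) hx)]
    exact min_le_left _ _
  induction h with
  | relabel ℓ ℓ' cs =>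
    simp only [truncWeight_node, add_sub_add_right_eq_sub]
    exact (abs_min_sub_min_le _ _ _).trans (abs_abs_sub_abs_le_abs_sub ℓ ℓ')
  | delete ℓ ℓ' cs' cs =>
    simp only [truncWeight_node, List.map_cons, List.map_append, List.sum_cons, List.sum_append]
    convert hmin ℓ' using 2
    ring
  | insert ℓ ℓ' cs' cs =>
    simp only [truncWeight_node, List.map_cons, List.map_append, List.sum_cons, List.sum_append]
    rw [← abs_neg]
    convert hmin ℓ' using 2
    ring
  | perm ℓ cs cs' hp =>
    simp [(hp.map (truncWeight x)).sum_eq]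
  | congr ℓ t t' cs c _ ih =>
    simpa only [truncWeight_node, List.map_cons, List.sum_cons, add_sub_add_left_eq_sub,
      add_sub_add_right_eq_sub] using ih

lemma GSeq.abs_truncWeight_sub_le {x : ℝ} (hx : 0 ≤ x) {t t' : LTree} {c : ℝ}
    (h : GSeq t t' c) : |truncWeight x t - truncWeight x t'| ≤ c := by
  induction h with
  | refl t => simp
  | cons hs _ ih =>
    exact (abs_sub_le _ _ _).trans (add_le_add (hs.abs_truncWeight_sub_le hx) ih)

lemma abs_truncWeight_sub_le_dG {x : ℝ} (hx : 0 ≤ x) {t t' : LTree}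
    (hreach : ∃ c, GSeq t t' c) : |truncWeight x t - truncWeight x t'| ≤ dG t t' :=
  le_csInf hreach fun _ hc => hc.abs_truncWeight_sub_le hx

end LTree

open LTree

lemma exists_gSeq_splitLeft_splitRight (x ε : ℝ) :
    ∃ c, GSeq (splitLeft x ε) (splitRight x) c := by
  let atB {s s' : List LTree} {c : ℝ} (h : GStep (.node x s) (.node x s') c) :
      GStep (.node 0 [.node x s]) (.node 0 [.node x s']) c :=
    .congr 0 _ _ [] c h
  have bringEFirst :=
    atB (.perm x _ _ (.swap (.node x [.node x [], .node ε []]) (.node (2 * x) []) []))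
  have deleteE := atB (.delete x x [.node x [], .node ε []] [.node (2 * x) []])
  have deleteD := atB (.delete x x [] [.node ε [], .node (2 * x) []])
  have relabelF := atB (.congr x _ _ [.node (2 * x) []] _ (.relabel ε (2 * x) []))
  exact ⟨_, .cons bringEFirst (.cons deleteE (.cons deleteD (.cons relabelF (.refl _))))⟩

lemma truncWeight_splitLeft {x : ℝ} (hx : 0 ≤ x) (ε : ℝ) :
    truncWeight x (splitLeft x ε) = 4 * x + min |ε| x := by
  simp [splitLeft, abs_of_nonneg hx, min_eq_left hx, min_eq_right (by linarith : x ≤ 2 * x)]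
  ring

lemma truncWeight_splitRight {x : ℝ} (hx : 0 ≤ x) :
    truncWeight x (splitRight x) = 3 * x := by
  simp [splitRight, abs_of_nonneg hx, min_eq_left hx, min_eq_right (by linarith : x ≤ 2 * x)]
  ring

lemma le_dG_splitLeft_splitRight {x : ℝ} (hx : 0 ≤ x) (ε : ℝ) :
    x ≤ dG (splitLeft x ε) (splitRight x) := by
  have hweight := abs_truncWeight_sub_le_dG hx (exists_gSeq_splitLeft_splitRight x ε)
  rw [truncWeight_splitLeft hx, truncWeight_splitRight hx] at hweight
  have hε : 0 ≤ min |ε| x := le_min (abs_nonneg ε) hx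
  linarith [le_abs_self (4 * x + min |ε| x - 3 * x)]

/-- the classic unconstrained edit distance `δ_G` is unstable under edge
splits: for every constant `C` there are merge trees differing by an edge split of
extent `ε` with `δ_G > C·ε`; in particular for the concrete pair of Figure 5 any classic
edit mapping leaves one node of label `x` unmatched, so `δ_G(T,T') ≥ x`. -/
theorem stmt_13 :
    (∀ C : ℝ, ∃ ε : ℝ, 0 < ε ∧ ∃ x : ℝ,
        C * ε < LTree.dG (splitLeft x ε) (splitRight x)) ∧
    (∀ x ε : ℝ, 0 < x → 0 ≤ ε → ε ≤ x →
        x ≤ LTree.dG (splitLeft x ε) (splitRight x)) := by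
  refine ⟨fun C => ⟨1, one_pos, |C| + 1, ?_⟩,
    fun x ε hx _ _ => le_dG_splitLeft_splitRight hx.le ε⟩
  calc C * 1 < |C| + 1 := by linarith [le_abs_self C]
    _ ≤ dG (splitLeft (|C| + 1) 1) (splitRight (|C| + 1)) :=
      le_dG_splitLeft_splitRight (by positivity) 1
end
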